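/- Logarithmic lower bound for the Riesz energy of connected sets with volume density: Let E ⊆ ℝ^N be a bounded measurable set with |E| = m ≥ 1, and suppose there is a constant c > 0 such that |E ∩ B_R(x)| ≥ cR for every x ∈ E and every 1 < R < diam(E)/2. Then for every α ∈ (0,1) there is a constant C = C(N, c) with NL_α(E) ≥ C m log(diam(E)/2) − C m. -/
import Mathlib

open MeasureTheory Metric
open scoped ENNReal

/-- The Riesz interaction energy `NL_α(E)`. -/
noncomputable def rieszEnergy {N : ℕ} (α : ℝ) (E : Set (EuclideanSpace ℝ (Fin N))) : ℝ≥0∞ :=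
  ∫⁻ x in E, ∫⁻ y in E, ENNReal.ofReal (‖x - y‖ ^ (-α))

/-- logarithmic lower bound for the Riesz energy of a bounded set whose
intersections with balls have at least linear volume growth. -/
theorem rieszEnergy_log_lower_bound
    (N : ℕ) (hN : 2 ≤ N) (c : ℝ) (hc : 0 < c) :
    ∃ C > 0, ∀ (E : Set (EuclideanSpace ℝ (Fin N))) (m : ℝ),
      MeasurableSet E → Bornology.IsBounded E → 1 ≤ m →
      volume E = ENNReal.ofReal m →
      (∀ x ∈ E, ∀ R : ℝ, 1 < R → R < Metric.diam E / 2 →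
        ENNReal.ofReal (c * R) ≤ volume (E ∩ Metric.ball x R)) →
      ∀ α : ℝ, 0 < α → α < 1 →
        ENNReal.ofReal (C * m * Real.log (Metric.diam E / 2) - C * m) ≤ rieszEnergy α E := by
  refine ⟨c, hc, ?_⟩
  intro E m hE hbd hm hvol hgrow α hα hα1
  set d : ℝ := Metric.diam E with hd
  have hm0 : (0:ℝ) < m := lt_of_lt_of_le one_pos hm
  by_cases hlog : Real.log (d / 2) ≤ 1
  · have hcm : 0 < c * m := mul_pos hc hm0
    have h0 : c * m * Real.log (d / 2) - c * m ≤ 0 := by nlinarith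
    simpa [ENNReal.ofReal_eq_zero.2 h0] using (zero_le _)
  push_neg at hlog
  have hd2 : (1:ℝ) < d / 2 := by
    by_contra h
    push_neg at h
    have := Real.log_nonpos (by positivity) h
    linarith
  have hdpos : (0:ℝ) < d := by linarith
  have ha : (0:ℝ) < 2 / d := by positivity
  have ha1 : 2 / d < 1 := by
    rw [div_lt_one hdpos]; linarith
  haveI : Nonempty (Fin N) := ⟨⟨0, by omega⟩⟩
  haveI : Nontrivial (EuclideanSpace ℝ (Fin N)) := inferInstance
  -- key inner bound
  have key : ∀ x ∈ E, ENNReal.ofReal (c * Real.log (d / 2)) ≤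
      ∫⁻ y in E, ENNReal.ofReal (‖x - y‖ ^ (-α)) := by
    intro x hx
    set g : EuclideanSpace ℝ (Fin N) → ℝ := fun y => min 1 ‖x - y‖⁻¹ with hg
    have hgm : Measurable g :=
      measurable_const.min ((continuous_const.sub continuous_id).norm.measurable.inv)
    have step1 : ∫⁻ y in E, ENNReal.ofReal (g y) ≤
        ∫⁻ y in E, ENNReal.ofReal (‖x - y‖ ^ (-α)) := by
      refine lintegral_mono fun y => ENNReal.ofReal_le_ofReal ?_
      set s : ℝ := ‖x - y‖ with hs
      have hs0 : 0 ≤ s := norm_nonneg _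
      rcases eq_or_lt_of_le hs0 with h0 | h0
      · have hxy : x - y = 0 := by rw [← norm_eq_zero, ← hs, ← h0]
        have hg0 : g y = 0 := by simp [g, hxy]
        rw [hg0]
        positivity
      rcases le_or_gt s 1 with h1 | h1
      · calc g y ≤ 1 := min_le_left _ _
          _ = s ^ (0:ℝ) := (Real.rpow_zero s).symm
          _ ≤ s ^ (-α) := Real.rpow_le_rpow_of_exponent_ge h0 h1 (by linarith)
      · calc g y ≤ s⁻¹ := min_le_right _ _
          _ = s ^ (-1:ℝ) := (Real.rpow_neg_one s).symm
          _ ≤ s ^ (-α) := Real.rpow_le_rpow_of_exponent_le h1.le (by linarith)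
    have layer : ∫⁻ y in E, ENNReal.ofReal (g y) =
        ∫⁻ t in Set.Ioi (0:ℝ), (volume.restrict E) {y | t < g y} :=
      lintegral_eq_lintegral_meas_lt (volume.restrict E)
        (Filter.Eventually.of_forall fun y => le_min zero_le_one (by positivity))
        hgm.aemeasurable
    have step2 : ∫⁻ t in Set.Ioo (2/d) 1, ENNReal.ofReal (c * (1/t)) ≤
        ∫⁻ t in Set.Ioi (0:ℝ), (volume.restrict E) {y | t < g y} := by
      refine le_trans ?_ (lintegral_mono_set (show Set.Ioo (2/d) (1:ℝ) ⊆ Set.Ioi 0 from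
        fun t ht => lt_trans ha ht.1))
      refine lintegral_mono_ae ((ae_restrict_mem measurableSet_Ioo).mono fun t ht => ?_)
      obtain ⟨ht1, ht2⟩ := ht
      have ht0 : 0 < t := lt_trans ha ht1
      have hR1 : 1 < 1 / t := by rw [lt_div_iff₀ ht0]; linarith
      have hR2 : 1 / t < d / 2 := by
        rw [div_lt_div_iff₀ ht0 (by linarith : (0:ℝ) < 2)]
        rw [div_lt_iff₀ hdpos] at ht1
        linarith
      have hsub : E ∩ Metric.ball x (1/t) ⊆ (E ∩ {y | t < g y}) ∪ {x} := by
        intro y ⟨hyE, hyb⟩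
        rcases eq_or_ne y x with rfl | hyx
        · exact Or.inr rfl
        refine Or.inl ⟨hyE, ?_⟩
        have hn0 : 0 < ‖x - y‖ := by
          rw [norm_pos_iff, sub_ne_zero]; exact fun h => hyx h.symm
        have hlt : ‖x - y‖ < 1 / t := by
          rw [mem_ball, dist_eq_norm] at hyb
          rwa [← norm_sub_rev y x]
        have : t < ‖x - y‖⁻¹ := by
          rw [lt_inv_comm₀ ht0 hn0] at *
          calc ‖x-y‖ < 1/t := hlt
            _ = t⁻¹ := one_div t
        exact lt_min (by linarith) this
      have hmeas : MeasurableSet {y | t < g y} := measurableSet_lt measurable_const hgm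
      calc ENNReal.ofReal (c * (1/t)) ≤ volume (E ∩ Metric.ball x (1/t)) :=
            hgrow x hx (1/t) hR1 hR2
        _ ≤ volume ((E ∩ {y | t < g y}) ∪ {x}) := measure_mono hsub
        _ ≤ volume (E ∩ {y | t < g y}) + volume ({x} : Set _) := measure_union_le _ _
        _ = volume (E ∩ {y | t < g y}) := by rw [measure_singleton, add_zero]
        _ = (volume.restrict E) {y | t < g y} := by
            rw [Measure.restrict_apply hmeas, Set.inter_comm]
    have step3 : ∫⁻ t in Set.Ioo (2/d) 1, ENNReal.ofReal (c * (1/t)) =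
        ENNReal.ofReal (c * Real.log (d / 2)) := by
      rw [← ofReal_integral_eq_lintegral_ofReal]
      · congr 1
        rw [← MeasureTheory.integral_Ioc_eq_integral_Ioo,
          ← intervalIntegral.integral_of_le ha1.le]
        rw [intervalIntegral.integral_const_mul]
        have hz : (0:ℝ) ∉ Set.uIcc (2/d) 1 := by
          rw [Set.uIcc_of_le ha1.le]
          rintro ⟨h1, h2⟩
          linarith
        rw [integral_one_div hz, one_div_div]
      · apply (ContinuousOn.integrableOn_Icc ?_).mono_set Set.Ioo_subset_Icc_self
        exact continuousOn_const.mul (continuousOn_const.div continuousOn_id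
          (fun u hu => ne_of_gt (lt_of_lt_of_le ha hu.1)))
      · refine (ae_restrict_mem measurableSet_Ioo).mono fun t ht => ?_
        have ht0 : 0 < t := lt_trans ha ht.1
        positivity
    calc ENNReal.ofReal (c * Real.log (d/2)) = _ := step3.symm
      _ ≤ _ := step2
      _ = ∫⁻ y in E, ENNReal.ofReal (g y) := layer.symm
      _ ≤ _ := step1
  -- outer integral
  have outer : ENNReal.ofReal (m * (c * Real.log (d/2))) ≤ rieszEnergy α E := by
    have : ∫⁻ _ in E, ENNReal.ofReal (c * Real.log (d/2)) ≤ rieszEnergy α E :=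
      lintegral_mono_ae ((ae_restrict_mem hE).mono fun x hx => key x hx)
    rwa [setLIntegral_const, hvol, ← ENNReal.ofReal_mul (by positivity), mul_comm] at this
  refine le_trans (ENNReal.ofReal_le_ofReal ?_) outer
  nlinarith
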